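/- Fix natural numbers D and k < n, and a k-dimensional linear subspace V of ℝⁿ. Let real numbers δ, r_min, r_max, Λ > 0 be given. Then there exists ε > 0 such that the following holds. For every linear D-simplex Δ in ℝⁿ for which there exists L > 0 with: r_min/L ≤ r_min(Δ) ≤ r_max(Δ) ≤ r_max/L; Λ(Δ) ≤ Λ·L; and every subsimplex Δ' of Δ of dimension at least 1 can be written as a join Δ' = v⋆F of one of its vertices v with the opposite face F such that Δ' is (δ/L)-semitransverse to 𝔉(V) in v — it holds that every subsimplex of Δ of dimension at least 1 is ε-transverse to 𝔉(V). -/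

import Mathlib

/-
Induction on the dimension `M` of the face, with `ε = (6 (1 + rmax / δ))⁻¹ ^ M`. Let `W` be the
direction space of a face of dimension `M + 1` and `D` a subspace of the same dimension close
to `W`.

If `dim W + dim V ≤ n` and `u` is a unit vector of `D ∩ V`, write the projection of `u` to `W`
as `f + t (v_i - v_l)`, with `f` in the direction space `F` of the facet opposite the vertex
`v_i` at which the face is semitransverse. If `|t|` is small, `u` is close to `F`, and tilting
`F` slightly (by the projection onto a hyperplane, applied to orthogonal complements) gives a
subspace that contains `u` and, by induction, is transverse to `V`: impossible. If `|t|` is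
large, moving `v_i` by less than `δ / L` puts `u` into the direction space of the perturbed
face, contradicting semitransversality.

If `dim W + dim V > n`, a unit vector `u` orthogonal to `D + V` is almost orthogonal to `F`,
and tilting `F` by the projection onto `u^⊥` contradicts the induction hypothesis in the
same way.
-/

noncomputable section

open Metric Set

/-- Two linear subspaces of ℝⁿ are transverse if the dimension of their span is maximal. -/
def Transv {n : ℕ} (V W : Submodule ℝ (EuclideanSpace ℝ (Fin n))) : Prop :=
  Module.finrank ℝ ↥(V ⊔ W) = min (Module.finrank ℝ ↥V + Module.finrank ℝ ↥W) n

/-- The space of directions of the affine span of a family of points (Gr(Δ)). -/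
def simplexDir {n m : ℕ} (v : Fin m → EuclideanSpace ℝ (Fin n)) :
    Submodule ℝ (EuclideanSpace ℝ (Fin n)) :=
  (affineSpan ℝ (Set.range v)).direction

/-- Orthogonal projection of ℝⁿ onto the orthogonal complement of V, as a map ℝⁿ → ℝⁿ. -/
def projPerp {n : ℕ} (V : Submodule ℝ (EuclideanSpace ℝ (Fin n)))
    (x : EuclideanSpace ℝ (Fin n)) : EuclideanSpace ℝ (Fin n) :=
  (Vᗮ.orthogonalProjectionOnto x : EuclideanSpace ℝ (Fin n))

/-- Orthogonal projection onto V as a continuous linear endomorphism of ℝⁿ. -/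
def projCL {n : ℕ} (V : Submodule ℝ (EuclideanSpace ℝ (Fin n))) :
    EuclideanSpace ℝ (Fin n) →L[ℝ] EuclideanSpace ℝ (Fin n) :=
  V.subtypeL.comp (V.orthogonalProjectionOnto)

/-- Operator-norm distance between orthogonal projections. -/
def dProj {n : ℕ} (V W : Submodule ℝ (EuclideanSpace ℝ (Fin n))) : ℝ :=
  ‖projCL V - projCL W‖

/-- `p⋆Δ` is `δ`-semitransverse to `𝔉(V)` in `p`. -/
def SemiT {n m : ℕ} (δ : ℝ) (p : EuclideanSpace ℝ (Fin n))
    (v : Fin m → EuclideanSpace ℝ (Fin n))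
    (V : Submodule ℝ (EuclideanSpace ℝ (Fin n))) : Prop :=
  ∀ p' : EuclideanSpace ℝ (Fin n), dist p' p < δ →
    AffineIndependent ℝ (Fin.cons p' v : Fin (m+1) → EuclideanSpace ℝ (Fin n)) ∧
    Transv (simplexDir (Fin.cons p' v : Fin (m+1) → EuclideanSpace ℝ (Fin n))) V

/-- Maximal distance between two vertices of a simplex. -/
def rMax {n m : ℕ} (v : Fin m → EuclideanSpace ℝ (Fin n)) : ℝ :=
  ⨆ i, ⨆ j, dist (v i) (v j)

/-- Minimal distance between a vertex and the affine span of the opposite face. -/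
def rMin {n m : ℕ} (v : Fin m → EuclideanSpace ℝ (Fin n)) : ℝ :=
  ⨅ i, Metric.infDist (v i) (affineSpan ℝ (v '' {i}ᶜ) : Set (EuclideanSpace ℝ (Fin n)))

/-- The degeneracy quantity Λ(Δ). -/
def Lam {n m : ℕ} (v : Fin (m+1) → EuclideanSpace ℝ (Fin n)) : ℝ :=
  sSup {t : ℝ | ∃ lam : Fin m → ℝ,
    ‖∑ i, lam i • (v i.succ - v 0)‖ = 1 ∧ ∃ i, t = |lam i|}

/-- ε-transversality of a simplex with vertices `v` to the constant foliation `𝔉(V)`. -/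
def EpsT {n m : ℕ} (ε : ℝ) (v : Fin (m+1) → EuclideanSpace ℝ (Fin n))
    (V : Submodule ℝ (EuclideanSpace ℝ (Fin n))) : Prop :=
  ∀ D : Submodule ℝ (EuclideanSpace ℝ (Fin n)),
    Module.finrank ℝ ↥D = m → dProj (simplexDir v) D < ε → Transv D V

/-- δ-semitransversality of a simplex in its `i`-th vertex. -/
def STat {n m : ℕ} (δ : ℝ) (w : Fin m → EuclideanSpace ℝ (Fin n)) (i : Fin m)
    (V : Submodule ℝ (EuclideanSpace ℝ (Fin n))) : Prop :=
  ∀ p' : EuclideanSpace ℝ (Fin n), dist p' (w i) < δ →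
    AffineIndependent ℝ (Function.update w i p') ∧
    Transv (simplexDir (Function.update w i p')) V

/-- The coordinate subspace ℝᵏ × {0} of ℝⁿ. -/
def stdFol (n k : ℕ) : Submodule ℝ (EuclideanSpace ℝ (Fin n)) where
  carrier := {x | ∀ i : Fin n, k ≤ (i : ℕ) → x i = 0}
  zero_mem' := fun i _ => rfl
  add_mem' := by
    intro x y hx hy i hi
    show x i + y i = 0
    rw [hx i hi, hy i hi, add_zero]
  smul_mem' := by
    intro c x hx i hi
    show c * x i = 0
    rw [hx i hi, mul_zero]

/-- Graph of a linear map V → V⊥ as a subspace of ℝⁿ. -/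
def graphOf {n : ℕ} {V : Submodule ℝ (EuclideanSpace ℝ (Fin n))}
    (T : ↥V →L[ℝ] ↥Vᗮ) : Submodule ℝ (EuclideanSpace ℝ (Fin n)) :=
  LinearMap.range (V.subtype + Vᗮ.subtype.comp T.toLinearMap)

section Perturbation

open Module RealInnerProductSpace

namespace Submodule

lemma finrank_map_of_near_id {E : Type*} [NormedAddCommGroup E] [NormedSpace ℝ E]
    {F : Submodule ℝ E} {φ : E →ₗ[ℝ] E} {η : ℝ} (hη : η < 1)
    (hφ : ∀ z ∈ F, ‖φ z - z‖ ≤ η * ‖z‖) :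
    finrank ℝ (F.map φ) = finrank ℝ F := by
  have hinj : Function.Injective (φ ∘ₗ F.subtype) := by
    rw [← LinearMap.ker_eq_bot, LinearMap.ker_eq_bot']
    intro z hz
    have h := hφ z z.2
    simp only [LinearMap.comp_apply, Submodule.subtype_apply] at hz
    rw [hz, zero_sub, norm_neg] at h
    exact coe_eq_zero.mp (norm_eq_zero.mp (by nlinarith [norm_nonneg (z : E)]))
  rw [← LinearMap.finrank_range_of_inj hinj, LinearMap.range_comp, range_subtype]

variable {E : Type*} [NormedAddCommGroup E] [InnerProductSpace ℝ E]

lemma norm_sub_starProjection_le_norm_sub (K : Submodule ℝ E) [K.HasOrthogonalProjection]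
    (x : E) {y : E} (hy : y ∈ K) : ‖x - K.starProjection x‖ ≤ ‖x - y‖ := by
  rw [starProjection_minimal]
  exact ciInf_le ⟨0, by rintro _ ⟨z, rfl⟩; positivity⟩ (⟨y, hy⟩ : K)

lemma norm_sub_starProjection_le_of_mem {W D : Submodule ℝ E} [W.HasOrthogonalProjection]
    [D.HasOrthogonalProjection] {u : E} (hu : u ∈ D) :
    ‖u - W.starProjection u‖ ≤ ‖W.starProjection - D.starProjection‖ * ‖u‖ := by
  calc ‖u - W.starProjection u‖ = ‖(D.starProjection - W.starProjection) u‖ := by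
        rw [sub_apply, starProjection_eq_self_iff.mpr hu]
    _ ≤ ‖W.starProjection - D.starProjection‖ * ‖u‖ := by
        rw [norm_sub_rev]; exact ContinuousLinearMap.le_opNorm _ _

lemma norm_starProjection_le_of_mem_orthogonal {W D : Submodule ℝ E}
    [W.HasOrthogonalProjection] [D.HasOrthogonalProjection] {u : E} (hu : u ∈ Dᗮ) :
    ‖W.starProjection u‖ ≤ ‖W.starProjection - D.starProjection‖ * ‖u‖ := by
  calc ‖W.starProjection u‖ = ‖(W.starProjection - D.starProjection) u‖ := by
        rw [sub_apply, (starProjection_apply_eq_zero_iff D).mpr hu, sub_zero]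
    _ ≤ _ := ContinuousLinearMap.le_opNorm _ _

variable [FiniteDimensional ℝ E] {F : Submodule ℝ E} {φ : E →ₗ[ℝ] E} {η : ℝ}

lemma norm_starProjection_le_of_mem_orthogonal_map (hη : 0 ≤ η)
    (hφ : ∀ z ∈ F, ‖φ z - z‖ ≤ η * ‖z‖) {y : E} (hy : y ∈ (F.map φ)ᗮ) :
    ‖F.starProjection y‖ ≤ η * ‖y‖ := by
  set z := F.starProjection y
  have hz : z ∈ F := starProjection_apply_mem F y
  -- `⟪z, y⟫ = ‖z‖ ^ 2`, and `φ z ∈ F.map φ` is orthogonal to `y`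
  have hsq : ‖z‖ ^ 2 = ⟪z - φ z, y⟫ := by
    rw [inner_sub_left, inner_right_of_mem_orthogonal (mem_map_of_mem hz) hy, sub_zero,
      ← real_inner_self_eq_norm_sq, inner_starProjection_left_eq_right,
      starProjection_eq_self_iff.mpr hz, real_inner_comm]
  have hle : ‖z‖ ^ 2 ≤ η * ‖z‖ * ‖y‖ := by
    calc ‖z‖ ^ 2 ≤ ‖z - φ z‖ * ‖y‖ := hsq ▸ real_inner_le_norm _ _
      _ ≤ η * ‖z‖ * ‖y‖ := by
        gcongr; rw [norm_sub_rev]; exact hφ z hz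
  nlinarith [norm_nonneg z, norm_nonneg y, mul_nonneg hη (norm_nonneg y)]

lemma norm_sub_starProjection_le_of_mem_map (hη0 : 0 ≤ η) (hη : η ≤ 1 / 2)
    (hφ : ∀ z ∈ F, ‖φ z - z‖ ≤ η * ‖z‖) {d : E} (hd : d ∈ F.map φ) :
    ‖d - F.starProjection d‖ ≤ 2 * η * ‖d‖ := by
  obtain ⟨z, hz, rfl⟩ := hd
  have h1 : ‖φ z - F.starProjection (φ z)‖ ≤ η * ‖z‖ :=
    (norm_sub_starProjection_le_norm_sub F _ hz).trans (hφ z hz)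
  have h2 : ‖z‖ ≤ ‖φ z‖ + η * ‖z‖ := by
    calc ‖z‖ = ‖φ z - (φ z - z)‖ := by rw [sub_sub_cancel]
      _ ≤ ‖φ z‖ + ‖φ z - z‖ := norm_sub_le _ _
      _ ≤ ‖φ z‖ + η * ‖z‖ := by gcongr; exact hφ z hz
  have h3 : ‖z‖ ≤ 2 * ‖φ z‖ := by
    nlinarith [mul_le_mul_of_nonneg_right hη (norm_nonneg z)]
  calc _ ≤ η * ‖z‖ := h1
    _ ≤ η * (2 * ‖φ z‖) := by gcongr
    _ = 2 * η * ‖φ z‖ := by ring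

lemma norm_starProjection_sub_starProjection_map_le (hη0 : 0 ≤ η) (hη : η ≤ 1 / 2)
    (hφ : ∀ z ∈ F, ‖φ z - z‖ ≤ η * ‖z‖) :
    ‖F.starProjection - (F.map φ).starProjection‖ ≤ 3 * η := by
  set D := F.map φ
  refine ContinuousLinearMap.opNorm_le_bound _ (by positivity) fun x => ?_
  have hsplit : (F.starProjection - D.starProjection) x =
      F.starProjection (x - D.starProjection x) -
        (D.starProjection x - F.starProjection (D.starProjection x)) := by
    rw [sub_apply, map_sub]; abel
  have hx : ‖x - D.starProjection x‖ ≤ ‖x‖ := by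
    simpa using norm_sub_starProjection_le_norm_sub D x D.zero_mem
  have h1 := norm_starProjection_le_of_mem_orthogonal_map hη0 hφ
    (sub_starProjection_mem_orthogonal (K := D) x)
  have h2 := norm_sub_starProjection_le_of_mem_map hη0 hη hφ (starProjection_apply_mem D x)
  have h3 := D.norm_starProjection_apply_le x
  rw [hsplit]
  calc _ ≤ η * ‖x - D.starProjection x‖ + 2 * η * ‖D.starProjection x‖ :=
        (norm_sub_le _ _).trans (add_le_add h1 h2)
    _ ≤ 3 * η * ‖x‖ := by nlinarith

variable {u : E}

lemma exists_finrank_eq_mem_orthogonal_of_norm_starProjection_le (hu : ‖u‖ = 1)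
    (hη : η ≤ 1 / 2) (h : ‖F.starProjection u‖ ≤ η) :
    ∃ D : Submodule ℝ E, finrank ℝ D = finrank ℝ F ∧ u ∈ Dᗮ ∧
      ‖F.starProjection - D.starProjection‖ ≤ 3 * η := by
  set φ : E →ₗ[ℝ] E := (ℝ ∙ u)ᗮ.starProjection
  have hφ : ∀ z ∈ F, ‖φ z - z‖ ≤ η * ‖z‖ := by
    intro z hz
    have hφz : φ z - z = -(⟪u, z⟫ • u) := by
      simp [φ, starProjection_orthogonal', starProjection_singleton, hu]
    calc ‖φ z - z‖ = |⟪F.starProjection u, z⟫| := by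
          rw [hφz, norm_neg, norm_smul, hu, mul_one, Real.norm_eq_abs,
            inner_starProjection_left_eq_right, starProjection_eq_self_iff.mpr hz]
      _ ≤ ‖F.starProjection u‖ * ‖z‖ := abs_real_inner_le_norm _ _
      _ ≤ η * ‖z‖ := by gcongr
  have hη0 : 0 ≤ η := (norm_nonneg _).trans h
  refine ⟨F.map φ, finrank_map_of_near_id (by linarith) hφ, ?_,
    norm_starProjection_sub_starProjection_map_le hη0 hη hφ⟩
  rw [mem_orthogonal]
  rintro _ ⟨z, -, rfl⟩
  exact inner_left_of_mem_orthogonal (mem_span_singleton_self u) (starProjection_apply_mem _ z)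

lemma exists_finrank_eq_mem_of_norm_sub_starProjection_le (hu : ‖u‖ = 1)
    (hη : η ≤ 1 / 2) (h : ‖u - F.starProjection u‖ ≤ η) :
    ∃ D : Submodule ℝ E, finrank ℝ D = finrank ℝ F ∧ u ∈ D ∧
      ‖F.starProjection - D.starProjection‖ ≤ 3 * η := by
  rw [← starProjection_orthogonal_val] at h
  obtain ⟨D, hD, huD, hFD⟩ :=
    exists_finrank_eq_mem_orthogonal_of_norm_starProjection_le hu hη h
  refine ⟨Dᗮ, ?_, huD, ?_⟩
  · have := finrank_add_finrank_orthogonal D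
    have := finrank_add_finrank_orthogonal F
    omega
  · calc ‖F.starProjection - Dᗮ.starProjection‖
          = ‖-(Fᗮ.starProjection - D.starProjection)‖ := by
            rw [starProjection_orthogonal' D, starProjection_orthogonal' F]
            congr 1; abel
      _ ≤ 3 * η := by rwa [norm_neg]

end Submodule

end Perturbation

section Simplex

open Module Submodule

variable {n : ℕ}

lemma dProj_eq (V W : Submodule ℝ (EuclideanSpace ℝ (Fin n))) :
    dProj V W = ‖V.starProjection - W.starProjection‖ := rfl

lemma transv_iff_disjoint {A B : Submodule ℝ (EuclideanSpace ℝ (Fin n))}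
    (h : finrank ℝ A + finrank ℝ B ≤ n) : Transv A B ↔ Disjoint A B := by
  have := finrank_sup_add_finrank_inf_eq A B
  rw [Transv, min_eq_left h, disjoint_iff, ← finrank_eq_zero]
  omega

lemma transv_iff_codisjoint {A B : Submodule ℝ (EuclideanSpace ℝ (Fin n))}
    (h : n ≤ finrank ℝ A + finrank ℝ B) : Transv A B ↔ Codisjoint A B := by
  rw [Transv, min_eq_right h, codisjoint_iff, eq_top_iff_finrank_eq, finrank_euclideanSpace_fin]

lemma EpsT.mono {m : ℕ} {ε ε' : ℝ} {w : Fin (m + 1) → EuclideanSpace ℝ (Fin n)}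
    {V : Submodule ℝ (EuclideanSpace ℝ (Fin n))} (h : EpsT ε w V) (hε : ε' ≤ ε) :
    EpsT ε' w V :=
  fun D hD hwD => h D hD (hwD.trans_le hε)

lemma epsT_point (ε : ℝ) (w : Fin 1 → EuclideanSpace ℝ (Fin n))
    (V : Submodule ℝ (EuclideanSpace ℝ (Fin n))) : EpsT ε w V := by
  intro D hD _
  rw [transv_iff_disjoint
    (by rw [hD, zero_add]; exact V.finrank_le.trans_eq finrank_euclideanSpace_fin)]
  exact disjoint_bot_left.mono_left (finrank_eq_zero.mp hD).le

lemma finrank_simplexDir {m : ℕ} {w : Fin (m + 1) → EuclideanSpace ℝ (Fin n)}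
    (hw : AffineIndependent ℝ w) : finrank ℝ (simplexDir w) = m := by
  rw [simplexDir, direction_affineSpan]
  exact hw.finrank_vectorSpan (Fintype.card_fin _)

lemma simplexDir_comp_le {m m' : ℕ} (w : Fin m → EuclideanSpace ℝ (Fin n))
    (f : Fin m' → Fin m) : simplexDir (w ∘ f) ≤ simplexDir w :=
  AffineSubspace.direction_le (affineSpan_mono ℝ (Set.range_comp_subset_range f w))

lemma sub_mem_simplexDir {m : ℕ} (w : Fin m → EuclideanSpace ℝ (Fin n)) (a b : Fin m) :
    w a - w b ∈ simplexDir w := by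
  rw [simplexDir, direction_affineSpan]
  exact vsub_mem_vectorSpan ℝ (Set.mem_range_self a) (Set.mem_range_self b)

lemma simplexDir_le_sup_span {m : ℕ} (w : Fin (m + 2) → EuclideanSpace ℝ (Fin n))
    (i : Fin (m + 2)) (j : Fin (m + 1)) :
    simplexDir w ≤ simplexDir (w ∘ i.succAboveEmb) ⊔ ℝ ∙ (w i - w (i.succAbove j)) := by
  rw [simplexDir, direction_affineSpan,
    vectorSpan_range_eq_span_range_vsub_right ℝ w (i.succAbove j), span_le]
  rintro _ ⟨a, rfl⟩
  rcases Fin.eq_self_or_eq_succAbove i a with rfl | ⟨b, rfl⟩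
  · exact mem_sup_right (mem_span_singleton_self _)
  · exact mem_sup_left (sub_mem_simplexDir (w ∘ i.succAboveEmb) b j)

lemma mem_simplexDir_update {m : ℕ} {w : Fin (m + 2) → EuclideanSpace ℝ (Fin n)}
    {i : Fin (m + 2)} {f : EuclideanSpace ℝ (Fin n)}
    (hf : f ∈ simplexDir (w ∘ i.succAboveEmb)) (t : ℝ) (p : EuclideanSpace ℝ (Fin n))
    (j : Fin (m + 1)) :
    f + t • (p - w (i.succAbove j)) ∈ simplexDir (Function.update w i p) := by
  have hface : Function.update w i p ∘ i.succAboveEmb = w ∘ i.succAboveEmb := by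
    ext1 a; simp [Fin.succAbove_ne]
  have hp : p - w (i.succAbove j) ∈ simplexDir (Function.update w i p) := by
    simpa [Fin.succAbove_ne] using sub_mem_simplexDir (Function.update w i p) i (i.succAbove j)
  exact add_mem (simplexDir_comp_le _ _ (hface ▸ hf)) (smul_mem _ t hp)

lemma dist_le_rMax {m : ℕ} (v : Fin m → EuclideanSpace ℝ (Fin n)) (a b : Fin m) :
    dist (v a) (v b) ≤ rMax v :=
  (le_ciSup (Set.finite_range _).bddAbove b).trans
    (le_ciSup (f := fun i => ⨆ j, dist (v i) (v j)) (Set.finite_range _).bddAbove a)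

lemma exists_norm_eq_one_mem {K : Submodule ℝ (EuclideanSpace ℝ (Fin n))} (hK : K ≠ ⊥) :
    ∃ u ∈ K, ‖u‖ = 1 := by
  obtain ⟨x, hx, hx0⟩ := exists_mem_ne_zero_of_ne_bot hK
  exact ⟨‖x‖⁻¹ • x, K.smul_mem _ hx, norm_smul_inv_norm hx0⟩

variable {m : ℕ} {V : Submodule ℝ (EuclideanSpace ℝ (Fin n))} {u : EuclideanSpace ℝ (Fin n)}
  {η ε' : ℝ}

lemma EpsT.exists_mem {w : Fin (m + 1) → EuclideanSpace ℝ (Fin n)} (h : EpsT ε' w V)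
    (hw : AffineIndependent ℝ w) (hu : ‖u‖ = 1) (hη : η ≤ 1 / 2) (hηε' : 3 * η < ε')
    (hdist : ‖u - (simplexDir w).starProjection u‖ ≤ η) :
    ∃ D : Submodule ℝ (EuclideanSpace ℝ (Fin n)),
      finrank ℝ D = m ∧ u ∈ D ∧ Transv D V := by
  obtain ⟨D, hD, huD, hwD⟩ := exists_finrank_eq_mem_of_norm_sub_starProjection_le hu hη hdist
  rw [finrank_simplexDir hw] at hD
  exact ⟨D, hD, huD, h D hD ((dProj_eq _ _).trans_le hwD |>.trans_lt hηε')⟩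

lemma EpsT.exists_mem_orthogonal {w : Fin (m + 1) → EuclideanSpace ℝ (Fin n)} (h : EpsT ε' w V)
    (hw : AffineIndependent ℝ w) (hu : ‖u‖ = 1) (hη : η ≤ 1 / 2) (hηε' : 3 * η < ε')
    (hproj : ‖(simplexDir w).starProjection u‖ ≤ η) :
    ∃ D : Submodule ℝ (EuclideanSpace ℝ (Fin n)),
      finrank ℝ D = m ∧ u ∈ Dᗮ ∧ Transv D V := by
  obtain ⟨D, hD, huD, hwD⟩ :=
    exists_finrank_eq_mem_orthogonal_of_norm_starProjection_le hu hη hproj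
  rw [finrank_simplexDir hw] at hD
  exact ⟨D, hD, huD, h D hD ((dProj_eq _ _).trans_le hwD |>.trans_lt hηε')⟩

variable {w : Fin (m + 2) → EuclideanSpace ℝ (Fin n)}
  {D : Submodule ℝ (EuclideanSpace ℝ (Fin n))}

lemma STat.exists_transv_mem {i : Fin (m + 2)} {δ : ℝ} (hi : STat δ w i V)
    {f r : EuclideanSpace ℝ (Fin n)} (hf : f ∈ simplexDir (w ∘ i.succAboveEmb)) {t : ℝ}
    (hr : ‖r‖ < |t| * δ) (j : Fin (m + 1)) :
    ∃ A : Submodule ℝ (EuclideanSpace ℝ (Fin n)), finrank ℝ A = m + 1 ∧ Transv A V ∧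
      f + t • (w i - w (i.succAbove j)) + r ∈ A := by
  have ht0 : t ≠ 0 := by
    rintro rfl
    rw [abs_zero, zero_mul] at hr
    exact (norm_nonneg r).not_gt hr
  have hdist : dist (w i + t⁻¹ • r) (w i) < δ := by
    rwa [dist_eq_norm, add_sub_cancel_left, norm_smul, norm_inv, Real.norm_eq_abs,
      inv_mul_lt_iff₀ (abs_pos.mpr ht0)]
  obtain ⟨haff, htransv⟩ := hi _ hdist
  refine ⟨_, finrank_simplexDir haff, htransv, ?_⟩
  convert mem_simplexDir_update hf t (w i + t⁻¹ • r) j using 1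
  rw [add_sub_right_comm, smul_add, smul_inv_smul₀ ht0, add_assoc]

lemma disjoint_of_sTat_of_epsT_facet (hw : AffineIndependent ℝ w) {i : Fin (m + 2)} {δ ρ : ℝ}
    (hρ : 0 ≤ ρ) (hdiam : ∀ a b, dist (w a) (w b) ≤ ρ * δ) (hi : STat δ w i V)
    (hfacet : EpsT ε' (w ∘ i.succAboveEmb) V) (hη : η ≤ 1 / 2) (hηε' : 3 * η < ε')
    (hdim : m + 1 + finrank ℝ V ≤ n) (hD : dProj (simplexDir w) D < η / (1 + ρ)) :
    Disjoint D V := by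
  set ε := η / (1 + ρ)
  set W := simplexDir w
  set F := simplexDir (w ∘ i.succAboveEmb)
  set l := i.succAbove 0
  rw [disjoint_iff]
  by_contra hDV
  obtain ⟨u, hu, hunit⟩ := exists_norm_eq_one_mem hDV
  rw [mem_inf] at hu
  have hnot_mem : ∀ A : Submodule ℝ (EuclideanSpace ℝ (Fin n)),
      finrank ℝ A ≤ m + 1 → Transv A V → u ∉ A := by
    intro A hA hAV huA
    have hAV := disjoint_def.mp ((transv_iff_disjoint (by omega)).mp hAV) u huA hu.2
    simp [hAV] at hunit
  have hr : ‖u - W.starProjection u‖ < ε :=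
    (norm_sub_starProjection_le_of_mem hu.1).trans_lt (by rwa [hunit, mul_one])
  obtain ⟨f, hf, t, hPu⟩ :
      ∃ f ∈ F, ∃ t : ℝ, W.starProjection u = f + t • (w i - w l) := by
    obtain ⟨f, hf, s, hs, hfs⟩ :=
      mem_sup.mp (simplexDir_le_sup_span w i 0 (starProjection_apply_mem W u))
    obtain ⟨t, rfl⟩ := mem_span_singleton.mp hs
    exact ⟨f, hf, t, hfs.symm⟩
  rcases le_or_gt (|t| * δ) ε with ht | ht
  · have hdistF : ‖u - F.starProjection u‖ ≤ η := calc
      ‖u - F.starProjection u‖ ≤ ‖u - f‖ := norm_sub_starProjection_le_norm_sub F u hf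
      _ = ‖(u - W.starProjection u) + t • (w i - w l)‖ := by rw [hPu]; congr 1; abel
      _ ≤ ‖u - W.starProjection u‖ + |t| * ‖w i - w l‖ := by
          rw [← Real.norm_eq_abs, ← norm_smul]; exact norm_add_le _ _
      _ ≤ ε + ρ * ε := by
          refine add_le_add hr.le ?_
          calc |t| * ‖w i - w l‖ ≤ |t| * (ρ * δ) := by
                rw [← dist_eq_norm]; gcongr; exact hdiam _ _
            _ = ρ * (|t| * δ) := by ring
            _ ≤ ρ * ε := by gcongr
      _ = η := by simp only [ε]; field_simp
    obtain ⟨D', hD', huD', hD'V⟩ :=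
      hfacet.exists_mem (hw.comp_embedding _) hunit hη hηε' hdistF
    exact hnot_mem D' (by omega) hD'V huD'
  · obtain ⟨A, hA, hAV, huA⟩ := hi.exists_transv_mem hf (hr.trans ht) 0
    rw [← hPu, add_sub_cancel] at huA
    exact hnot_mem A hA.le hAV huA

lemma codisjoint_of_epsT_facet (hw : AffineIndependent ℝ w) {j : Fin (m + 2)}
    (hfacet : EpsT ε' (w ∘ j.succAboveEmb) V) (hη : η ≤ 1 / 2) (hηε' : 3 * η < ε')
    (hdim : n ≤ m + finrank ℝ V) (hD : dProj (simplexDir w) D ≤ η) : Codisjoint D V := by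
  rw [codisjoint_iff, ← orthogonal_eq_bot_iff]
  by_contra hDV
  obtain ⟨u, hu, hunit⟩ := exists_norm_eq_one_mem hDV
  rw [← inf_orthogonal, mem_inf] at hu
  have hproj : ‖(simplexDir (w ∘ j.succAboveEmb)).starProjection u‖ ≤ η := by
    rw [← starProjection_comp_starProjection_of_le (simplexDir_comp_le w j.succAboveEmb),
      ContinuousLinearMap.comp_apply]
    calc ‖(simplexDir (w ∘ j.succAboveEmb)).starProjection ((simplexDir w).starProjection u)‖
        ≤ ‖(simplexDir w).starProjection u‖ := norm_starProjection_apply_le _ _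
      _ ≤ ‖(simplexDir w).starProjection - D.starProjection‖ * ‖u‖ :=
          norm_starProjection_le_of_mem_orthogonal hu.1
      _ ≤ η := by rw [hunit, mul_one]; exact hD
  obtain ⟨D', hD', huD', hD'V⟩ :=
    hfacet.exists_mem_orthogonal (hw.comp_embedding _) hunit hη hηε' hproj
  have hcod := (transv_iff_codisjoint (by rw [hD']; exact hdim)).mp hD'V
  have hu0 : u ∈ (D' ⊔ V)ᗮ := by rw [← inf_orthogonal]; exact mem_inf.mpr ⟨huD', hu.2⟩
  rw [codisjoint_iff.mp hcod, top_orthogonal_eq_bot, mem_bot] at hu0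
  simp [hu0] at hunit

lemma epsT_succ (hw : AffineIndependent ℝ w) {δ ρ : ℝ} (hρ : 0 ≤ ρ)
    (hdiam : ∀ a b, dist (w a) (w b) ≤ ρ * δ) (hST : ∃ i, STat δ w i V)
    (hfacets : ∀ j, EpsT ε' (w ∘ Fin.succAboveEmb j) V)
    (hη : η ≤ 1 / 2) (hηε' : 3 * η < ε') : EpsT (η / (1 + ρ)) w V := by
  intro D hD hWD
  rcases le_or_gt (m + 1 + finrank ℝ V) n with hdim | hdim
  · obtain ⟨i, hi⟩ := hST
    exact (transv_iff_disjoint (by omega)).mpr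
      (disjoint_of_sTat_of_epsT_facet hw hρ hdiam hi (hfacets i) hη hηε' hdim hWD)
  · have hη0 : 0 < η :=
      (div_pos_iff_of_pos_right (by linarith)).mp ((norm_nonneg _).trans_lt hWD)
    exact (transv_iff_codisjoint (by omega)).mpr
      (codisjoint_of_epsT_facet hw (hfacets 0) hη hηε' (by omega)
        (hWD.le.trans (div_le_self hη0.le (by linarith))))

theorem epsT_faces {N : ℕ} {v : Fin N → EuclideanSpace ℝ (Fin n)}
    (hv : AffineIndependent ℝ v) {δ ρ : ℝ} (hρ : 0 ≤ ρ)
    (hdiam : ∀ a b, dist (v a) (v b) ≤ ρ * δ)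
    (hST : ∀ (m : ℕ) (σ : Fin (m + 2) ↪ Fin N), ∃ i, STat δ (v ∘ σ) i V) :
    ∀ (M : ℕ) (σ : Fin (M + 1) ↪ Fin N), EpsT ((6 * (1 + ρ))⁻¹ ^ M) (v ∘ σ) V
  | 0, σ => epsT_point _ _ _
  | M + 1, σ => by
    set ε := (6 * (1 + ρ))⁻¹ ^ M
    have hε0 : 0 < ε := by positivity
    have hε1 : ε ≤ 1 := pow_le_one₀ (by positivity) (inv_le_one_of_one_le₀ (by linarith))
    convert epsT_succ (hv.comp_embedding σ) hρ (fun a b => hdiam _ _) (hST M σ)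
      (fun j => epsT_faces hv hρ hdiam hST M ((Fin.succAboveEmb j).trans σ))
      (η := ε / 6) (by linarith) (by linarith) using 1
    rw [pow_succ, div_div, div_eq_mul_inv]

end Simplex

theorem stmt_10_general (n D : ℕ)
    (V : Submodule ℝ (EuclideanSpace ℝ (Fin n)))
    (δ rmin rmax Λ : ℝ) (hδ : 0 < δ) (hrmax : 0 < rmax) :
    ∃ ε > (0:ℝ),
      ∀ v : Fin (D+1) → EuclideanSpace ℝ (Fin n), AffineIndependent ℝ v →
        (∃ L > (0:ℝ),
          rmin / L ≤ rMin v ∧ rMin v ≤ rMax v ∧ rMax v ≤ rmax / L ∧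
          Lam v ≤ Λ * L ∧
          (∀ (m : ℕ) (σ : Fin (m+2) ↪ Fin (D+1)), ∃ i : Fin (m+2),
            STat (δ / L) (v ∘ σ) i V)) →
        ∀ (m : ℕ) (σ : Fin (m+2) ↪ Fin (D+1)), EpsT ε (v ∘ σ) V := by
  refine ⟨(6 * (1 + rmax / δ))⁻¹ ^ D, by positivity, ?_⟩
  rintro v hv ⟨L, hL, -, -, hvmax, -, hST⟩ m σ
  -- the diameter bound and the semitransversality radius scale alike in `L`
  have hdiam : ∀ a b, dist (v a) (v b) ≤ rmax / δ * (δ / L) := fun a b => by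
    rw [div_mul_div_cancel₀ hδ.ne']
    exact (dist_le_rMax v a b).trans hvmax
  have hmD : m + 1 ≤ D := by simpa using Fintype.card_le_of_embedding σ
  exact (epsT_faces hv (by positivity) hdiam hST (m + 1) σ).mono
    (pow_le_pow_of_le_one (by positivity) (inv_le_one_of_one_le₀ (by
      have : 0 ≤ rmax / δ := by positivity
      linarith)) hmD)

theorem stmt_10 (n D k : ℕ) (hk : k < n)
    (V : Submodule ℝ (EuclideanSpace ℝ (Fin n))) (hV : Module.finrank ℝ ↥V = k)
    (δ rmin rmax Λ : ℝ) (hδ : 0 < δ) (hrmin : 0 < rmin) (hrmax : 0 < rmax) (hΛ : 0 < Λ) :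
    ∃ ε > (0:ℝ),
      ∀ v : Fin (D+1) → EuclideanSpace ℝ (Fin n), AffineIndependent ℝ v →
        (∃ L > (0:ℝ),
          rmin / L ≤ rMin v ∧ rMin v ≤ rMax v ∧ rMax v ≤ rmax / L ∧
          Lam v ≤ Λ * L ∧
          (∀ (m : ℕ) (σ : Fin (m+2) ↪ Fin (D+1)), ∃ i : Fin (m+2),
            STat (δ / L) (v ∘ σ) i V)) →
        ∀ (m : ℕ) (σ : Fin (m+2) ↪ Fin (D+1)), EpsT ε (v ∘ σ) V :=
  stmt_10_general n D V δ rmin rmax Λ hδ hrmax
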